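/- Let [I,c] be a cycloribbon with n cells and colors in {1,…,r}, and let 0 ≤ k ≤ n. Let I' and I'' be the compositions whose ribbon diagrams are formed by the first k cells and the last n-k cells of the diagram of I, and let c' = (c_1,…,c_k), c'' = (c_{k+1},…,c_n). Then [I',c'] and [I'',c''] are again cycloribbons, and the restriction of the simple module S_{[I,c]} to the parabolic subalgebra H_{k,r}(0) ⊗ H_{n-k,r}(0) of H_{n,r}(0) is isomorphic to S_{[I',c']} ⊗ S_{[I'',c'']}. -/
import Mathlib


/-!
STATEMENT 17: Let `[I,c]` be a cycloribbon with `n` cells and colors in `{1,…,r}`,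
and let `0 ≤ k ≤ n`.  Let `I'` and `I''` be the compositions whose ribbon diagrams
are formed by the first `k` cells and the last `n-k` cells of the diagram of `I`
(characterized by their descent sets), and let `c' = (c_1,…,c_k)`,
`c'' = (c_{k+1},…,c_n)`.  Then `[I',c']` and `[I'',c'']` are again cycloribbons,
and the restriction of the simple module `S_{[I,c]}` to the parabolic subalgebra
`H_{k,r}(0) ⊗ H_{n-k,r}(0)` of `H_{n,r}(0)` is isomorphic to
`S_{[I',c']} ⊗ S_{[I'',c'']}`.

Since the modules involved are one-dimensional, they are encoded by their characters
(algebra morphisms to `ℂ`, with the eigenvalues of `T_i` given by the descents of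
the shape of the associated anticycloribbon, i.e. `descPhi`, and those of `L_d`
being `δ_{d,c}`); the restriction statement says
`χ(ε'(a) ε''(b)) = χ'(a) χ''(b)` for the parabolic embeddings `ε', ε''`.
-/

namespace AKSPaper

noncomputable section

open Polynomial

/-- The Lagrange interpolation polynomial `P_k(X) = ∏_{l ≠ k} (X - u_l)/(u_k - u_l)`. -/
def Lag {r : ℕ} (u : Fin r → ℂ) (k : Fin r) : ℂ[X] :=
  ∏ l ∈ Finset.univ.erase k, (Polynomial.C ((u k - u l)⁻¹) * (X - Polynomial.C (u l)))

/-- The free algebra on the generators `T_1, …, T_{n-1}` (indexed by `Fin (n-1)`) and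
`ξ_1, …, ξ_n` (indexed by `Fin n`). -/
abbrev FA (n : ℕ) := FreeAlgebra ℂ (Fin (n - 1) ⊕ Fin n)

/-- The generator `T_{i+1}` in the free algebra. -/
def Tf {n : ℕ} (i : Fin (n - 1)) : FA n := FreeAlgebra.ι ℂ (Sum.inl i)

/-- The generator `ξ_{j+1}` in the free algebra. -/
def Xf {n : ℕ} (j : Fin n) : FA n := FreeAlgebra.ι ℂ (Sum.inr j)

/-- For the T-generator of index `i`, the position of `ξ_i` (0-indexed). -/
def loIdx {n : ℕ} (i : Fin (n - 1)) : Fin n := ⟨i.1, by have := i.isLt; omega⟩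

/-- For the T-generator of index `i`, the position of `ξ_{i+1}` (0-indexed). -/
def hiIdx {n : ℕ} (i : Fin (n - 1)) : Fin n := ⟨i.1 + 1, by have := i.isLt; omega⟩

/-- The defining relations of the Ariki-Koike algebra `H_{n,r}(q)` in Shoji's
normalized presentation, with parameters `u_1, …, u_r`. -/
inductive AKRel (n r : ℕ) (q : ℂ) (u : Fin r → ℂ) : FA n → FA n → Prop
  | quad (i : Fin (n - 1)) :
      AKRel n r q u ((Tf i - algebraMap ℂ (FA n) q) * (Tf i + 1)) 0
  | braid (i j : Fin (n - 1)) (h : (i : ℕ) + 1 = j) :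
      AKRel n r q u (Tf i * Tf j * Tf i) (Tf j * Tf i * Tf j)
  | commT (i j : Fin (n - 1)) (h : (i : ℕ) + 2 ≤ j ∨ (j : ℕ) + 2 ≤ i) :
      AKRel n r q u (Tf i * Tf j) (Tf j * Tf i)
  | xiAnn (j : Fin n) :
      AKRel n r q u
        (Polynomial.aeval (Xf j) (∏ l : Fin r, (X - Polynomial.C (u l)))) 0
  | xiComm (i j : Fin n) : AKRel n r q u (Xf i * Xf j) (Xf j * Xf i)
  | cross (i : Fin (n - 1)) :
      AKRel n r q u (Tf i * Xf (loIdx i))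
        (Xf (hiIdx i) * Tf i - (q - 1) •
          ∑ p ∈ Finset.univ.filter (fun p : Fin r × Fin r => p.1 < p.2),
            (u p.2 - u p.1) •
              (Polynomial.aeval (Xf (loIdx i)) (Lag u p.1) *
                Polynomial.aeval (Xf (hiIdx i)) (Lag u p.2)))
  | sumComm (i : Fin (n - 1)) :
      AKRel n r q u (Tf i * (Xf (hiIdx i) + Xf (loIdx i)))
        ((Xf (hiIdx i) + Xf (loIdx i)) * Tf i)
  | farComm (i : Fin (n - 1)) (j : Fin n) (h : (j : ℕ) ≠ i ∧ (j : ℕ) ≠ (i : ℕ) + 1) :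
      AKRel n r q u (Tf i * Xf j) (Xf j * Tf i)

/-- The Ariki-Koike algebra `H_{n,r}(q)` (for `q = 0`, the 0-Ariki-Koike-Shoji
algebra). -/
abbrev AK (n r : ℕ) (q : ℂ) (u : Fin r → ℂ) := RingQuot (AKRel n r q u)

/-- The generator `T_{i+1}` of `H_{n,r}(q)`. -/
def Tg {n r : ℕ} {q : ℂ} {u : Fin r → ℂ} (i : Fin (n - 1)) : AK n r q u :=
  RingQuot.mkAlgHom ℂ (AKRel n r q u) (Tf i)

/-- The generator `T` of `H_{n,r}(q)` acting on 0-indexed positions `j, j+1`. -/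
def TgPos {n r : ℕ} {q : ℂ} {u : Fin r → ℂ} (j : ℕ) (h : j + 1 < n) : AK n r q u :=
  Tg ⟨j, by omega⟩

/-- The generator `ξ_{j+1}` of `H_{n,r}(q)`. -/
def Xg {n r : ℕ} {q : ℂ} {u : Fin r → ℂ} (j : Fin n) : AK n r q u :=
  RingQuot.mkAlgHom ℂ (AKRel n r q u) (Xf j)

/-- The Lagrange idempotent `L_c = P_{c_1}(ξ_1) ⋯ P_{c_n}(ξ_n)`. -/
def L {n r : ℕ} {q : ℂ} {u : Fin r → ℂ} (c : Fin n → Fin r) : AK n r q u :=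
  (List.ofFn fun j : Fin n =>
    Polynomial.aeval (Xg (q := q) (u := u) j) (Lag u (c j))).prod

/-- The elementary transposition exchanging the 0-indexed positions `j`, `j+1`. -/
def sw {n : ℕ} (j : ℕ) (h : j + 1 < n) : Equiv.Perm (Fin n) :=
  Equiv.swap ⟨j, by omega⟩ ⟨j + 1, h⟩

/-- The number of inversions of a permutation. -/
def invnum {n : ℕ} (σ : Equiv.Perm (Fin n)) : ℕ :=
  (Finset.univ.filter fun p : Fin n × Fin n => p.1 < p.2 ∧ σ p.2 < σ p.1).card

/-- `Tw` is the family `σ ↦ T_σ` (product of the `T_i` along any reduced word). -/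
def IsTFam {n r : ℕ} {q : ℂ} {u : Fin r → ℂ}
    (Tw : Equiv.Perm (Fin n) → AK n r q u) : Prop :=
  Tw 1 = 1 ∧ ∀ (j : ℕ) (h : j + 1 < n) (τ : Equiv.Perm (Fin n)),
    invnum (sw j h * τ) = invnum τ + 1 → Tw (sw j h * τ) = TgPos j h * Tw τ

/-- `i` (0-indexed, `i+1 < n`) is a descent of the permutation `σ`. -/
def descPerm {n : ℕ} (σ : Equiv.Perm (Fin n)) (i : ℕ) : Prop :=
  ∃ h : i + 1 < n, σ ⟨i + 1, h⟩ < σ ⟨i, by omega⟩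

/-- `i` (0-indexed) is a descent of the composition `I` of `n`. -/
def descComp {n : ℕ} (I : Composition n) (i : ℕ) : Prop :=
  i + 1 < n ∧ ∃ k ∈ Finset.range (n + 1), (I.blocks.take k).sum = i + 1

/-- `[I, c]` is a cycloribbon: weakly increasing along rows, weakly decreasing down
columns. -/
def IsCycloribbon {n r : ℕ} (I : Composition n) (c : Fin n → Fin r) : Prop :=
  ∀ (i : ℕ) (h : i + 1 < n),
    (descComp I i → c ⟨i + 1, h⟩ ≤ c ⟨i, by omega⟩) ∧
    (¬ descComp I i → c ⟨i, by omega⟩ ≤ c ⟨i + 1, h⟩)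

/-- `[I, c]` is an anticycloribbon: weakly decreasing along rows, weakly increasing
down columns. -/
def IsAnticycloribbon {n r : ℕ} (I : Composition n) (c : Fin n → Fin r) : Prop :=
  ∀ (i : ℕ) (h : i + 1 < n),
    (descComp I i → c ⟨i, by omega⟩ ≤ c ⟨i + 1, h⟩) ∧
    (¬ descComp I i → c ⟨i + 1, h⟩ ≤ c ⟨i, by omega⟩)

/-- `i` is a descent of the shape of the colored ribbon `φ([I,c])`. -/
def descPhi {n r : ℕ} (I : Composition n) (c : Fin n → Fin r) (i : ℕ) : Prop :=
  ∃ h : i + 1 < n,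
    (descComp I i ∧ c ⟨i + 1, h⟩ = c ⟨i, by omega⟩) ∨
    (¬ descComp I i ∧ c ⟨i + 1, h⟩ ≠ c ⟨i, by omega⟩)

/-- `χ` is the character of the one-dimensional simple module `S_{[I,c]}`. -/
def CharData {n r : ℕ} {q : ℂ} {u : Fin r → ℂ} (I : Composition n)
    (c : Fin n → Fin r) (χ : AK n r q u →ₐ[ℂ] ℂ) : Prop :=
  (∀ (j : ℕ) (h : j + 1 < n),
    (descPhi I c j → χ (TgPos j h) = -1) ∧
    (¬ descPhi I c j → χ (TgPos j h) = 0)) ∧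
  (∀ d : Fin n → Fin r, (d = c → χ (L (u := u) d) = 1) ∧ (d ≠ c → χ (L (u := u) d) = 0))

/-! ### Auxiliary lemmas -/

lemma lag_eq_basis {r : ℕ} (u : Fin r → ℂ) (k : Fin r) :
    Lag u k = Lagrange.basis Finset.univ u k := by
  unfold Lag Lagrange.basis Lagrange.basisDivisor
  rfl

lemma sum_lag {r : ℕ} (hr : 0 < r) (u : Fin r → ℂ) (hu : Function.Injective u) :
    ∑ l, Lag u l = 1 := by
  have : Nonempty (Fin r) := ⟨⟨0, hr⟩⟩
  simp only [lag_eq_basis]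
  exact Lagrange.sum_basis hu.injOn Finset.univ_nonempty

lemma xg_sub_mul_lag {n r : ℕ} {q : ℂ} {u : Fin r → ℂ} (j : Fin n) (l : Fin r) :
    (Xg (q := q) (u := u) j - algebraMap ℂ (AK n r q u) (u l)) *
      aeval (Xg (q := q) (u := u) j) (Lag u l) = 0 := by
  have hzero : aeval (Xg (q := q) (u := u) j)
      (∏ m : Fin r, (X - Polynomial.C (u m))) = 0 := by
    have h := RingQuot.mkAlgHom_rel ℂ (AKRel.xiAnn (n := n) (r := r) (q := q) (u := u) j)
    rw [map_zero] at h
    rw [Xg, aeval_algHom_apply]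
    exact h
  have hpoly : (X - Polynomial.C (u l)) * Lag u l
      = Polynomial.C (∏ m ∈ Finset.univ.erase l, (u l - u m)⁻¹) *
        ∏ m : Fin r, (X - Polynomial.C (u m)) := by
    rw [Lag, Finset.prod_mul_distrib, ← map_prod,
      ← Finset.mul_prod_erase Finset.univ (fun m => X - Polynomial.C (u m))
        (Finset.mem_univ l)]
    ring
  have hmain : (Xg (q := q) (u := u) j - algebraMap ℂ (AK n r q u) (u l)) *
      aeval (Xg (q := q) (u := u) j) (Lag u l)
      = aeval (Xg (q := q) (u := u) j) ((X - Polynomial.C (u l)) * Lag u l) := by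
    rw [map_mul, map_sub, aeval_X, aeval_C]
  rw [hmain, hpoly, map_mul, aeval_C, hzero, mul_zero]

lemma char_L_prod {n r : ℕ} {q : ℂ} {u : Fin r → ℂ} (χ : AK n r q u →ₐ[ℂ] ℂ)
    (d : Fin n → Fin r) :
    χ (L d) = ∏ j : Fin n, χ (aeval (Xg (q := q) (u := u) j) (Lag u (d j))) := by
  rw [L, map_list_prod, List.map_ofFn, List.prod_ofFn]
  rfl

lemma char_xg {n r : ℕ} {q : ℂ} {u : Fin r → ℂ} (hu : Function.Injective u)
    {I : Composition n} {c : Fin n → Fin r} {χ : AK n r q u →ₐ[ℂ] ℂ}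
    (hχ : CharData I c χ) (j : Fin n) :
    χ (Xg j) = u (c j) := by
  have hr : 0 < r := (c j).pos
  have hsum : ∀ i : Fin n, ∑ m, χ (aeval (Xg (q := q) (u := u) i) (Lag u m)) = 1 := by
    intro i
    rw [← map_sum, ← map_sum, sum_lag hr u hu, map_one, map_one]
  have hone : ∏ i, χ (aeval (Xg (q := q) (u := u) i) (Lag u (c i))) = 1 := by
    rw [← char_L_prod]; exact (hχ.2 c).1 rfl
  have hne : ∏ i ∈ Finset.univ.erase j,
      χ (aeval (Xg (q := q) (u := u) i) (Lag u (c i))) ≠ 0 := by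
    intro h0
    rw [← Finset.mul_prod_erase Finset.univ _ (Finset.mem_univ j), h0, mul_zero] at hone
    exact zero_ne_one (α := ℂ) hone
  have hdiag : ∀ m, m ≠ c j → χ (aeval (Xg (q := q) (u := u) j) (Lag u m)) = 0 := by
    intro m hm
    have hd : Function.update c j m ≠ c := by
      intro h
      apply hm
      have := congrFun h j
      simpa using this
    have h0 : χ (L (Function.update c j m)) = 0 := (hχ.2 _).2 hd
    rw [char_L_prod, ← Finset.mul_prod_erase Finset.univ _ (Finset.mem_univ j)] at h0
    have heq : ∏ i ∈ Finset.univ.erase j,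
        χ (aeval (Xg (q := q) (u := u) i) (Lag u (Function.update c j m i)))
        = ∏ i ∈ Finset.univ.erase j,
          χ (aeval (Xg (q := q) (u := u) i) (Lag u (c i))) :=
      Finset.prod_congr rfl fun i hi => by
        rw [Function.update_of_ne (Finset.ne_of_mem_erase hi)]
    rw [heq] at h0
    simp only [Function.update_self] at h0
    exact (mul_eq_zero.mp h0).resolve_right hne
  have hpc : χ (aeval (Xg (q := q) (u := u) j) (Lag u (c j))) = 1 := by
    have h := hsum j
    rwa [Finset.sum_eq_single (c j) (fun m _ hm => hdiag m hm)
      (fun h => absurd (Finset.mem_univ _) h)] at h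
  have hk := congrArg χ (xg_sub_mul_lag (q := q) (u := u) j (c j))
  rw [map_mul, map_sub, map_zero, hpc, mul_one, sub_eq_zero] at hk
  rw [hk]
  simp

lemma ak_hom_ext {n r : ℕ} {q : ℂ} {u : Fin r → ℂ} {f g : AK n r q u →ₐ[ℂ] ℂ}
    (hT : ∀ i : Fin (n - 1), f (Tg i) = g (Tg i))
    (hX : ∀ j : Fin n, f (Xg j) = g (Xg j)) : f = g := by
  have hcomp : f.comp (RingQuot.mkAlgHom ℂ (AKRel n r q u))
      = g.comp (RingQuot.mkAlgHom ℂ (AKRel n r q u)) := by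
    apply FreeAlgebra.hom_ext
    funext s
    cases s with
    | inl i => exact hT i
    | inr j => exact hX j
  apply AlgHom.ext
  intro x
  obtain ⟨y, rfl⟩ := RingQuot.mkAlgHom_surjective ℂ (AKRel n r q u) x
  exact AlgHom.congr_fun hcomp y

theorem restriction_of_simple (n r k : ℕ) (hk : k ≤ n) (u : Fin r → ℂ)
    (hu : Function.Injective u)
    (I : Composition n) (c : Fin n → Fin r) (hIc : IsCycloribbon I c)
    -- the parabolic embedding of the first factor
    (ε' : AK k r 0 u →ₐ[ℂ] AK n r 0 u)
    (hε'T : ∀ i : Fin (k - 1),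
      ε' (Tg i) = Tg ⟨i.1, by have := i.isLt; omega⟩)
    (hε'X : ∀ j : Fin k,
      ε' (Xg j) = Xg ⟨j.1, by have := j.isLt; omega⟩)
    -- the parabolic embedding of the second factor
    (ε'' : AK (n - k) r 0 u →ₐ[ℂ] AK n r 0 u)
    (hε''T : ∀ i : Fin (n - k - 1),
      ε'' (Tg i) = Tg ⟨i.1 + k, by have := i.isLt; omega⟩)
    (hε''X : ∀ j : Fin (n - k),
      ε'' (Xg j) = Xg ⟨j.1 + k, by have := j.isLt; omega⟩)
    -- `I'`: the first k cells of I; `I''`: the last n-k cells of I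
    (I' : Composition k)
    (hI' : ∀ i : ℕ, descComp I' i ↔ (i + 1 < k ∧ descComp I i))
    (I'' : Composition (n - k))
    (hI'' : ∀ i : ℕ, descComp I'' i ↔ (i + 1 < n - k ∧ descComp I (i + k))) :
    -- restrictions of the color word
    (IsCycloribbon I' (fun i : Fin k => c ⟨i.1, by have := i.isLt; omega⟩)) ∧
    (IsCycloribbon I'' (fun i : Fin (n - k) => c ⟨i.1 + k, by have := i.isLt; omega⟩)) ∧
    -- the restriction of S_{[I,c]} is S_{[I',c']} ⊗ S_{[I'',c'']}
    (∀ (χ : AK n r 0 u →ₐ[ℂ] ℂ) (χ' : AK k r 0 u →ₐ[ℂ] ℂ)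
        (χ'' : AK (n - k) r 0 u →ₐ[ℂ] ℂ),
      CharData I c χ →
      CharData I' (fun i : Fin k => c ⟨i.1, by have := i.isLt; omega⟩) χ' →
      CharData I'' (fun i : Fin (n - k) => c ⟨i.1 + k, by have := i.isLt; omega⟩) χ'' →
      ∀ (a : AK k r 0 u) (b : AK (n - k) r 0 u),
        χ (ε' a * ε'' b) = χ' a * χ'' b) := by
  have ccong : ∀ (a b : ℕ) (ha : a < n) (hb : b < n), a = b →
      c ⟨a, ha⟩ = c ⟨b, hb⟩ := by
    intro a b ha hb h; subst h; rfl
  refine ⟨?_, ?_, ?_⟩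
  · -- `[I', c']` is a cycloribbon
    intro i h
    have hin : i + 1 < n := lt_of_lt_of_le h hk
    have hdc : descComp I' i ↔ descComp I i := by
      rw [hI' i]; exact and_iff_right h
    refine ⟨fun hd => ?_, fun hd => ?_⟩
    · exact (hIc i hin).1 (hdc.mp hd)
    · exact (hIc i hin).2 (fun hc => hd (hdc.mpr hc))
  · -- `[I'', c'']` is a cycloribbon
    intro i h
    have hin : (i + k) + 1 < n := by omega
    have hdc : descComp I'' i ↔ descComp I (i + k) := by
      rw [hI'' i]; exact and_iff_right h
    have e1 : c ⟨i + 1 + k, by omega⟩ = c ⟨(i + k) + 1, hin⟩ := ccong _ _ _ _ (by omega)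
    refine ⟨fun hd => ?_, fun hd => ?_⟩
    · exact e1.trans_le ((hIc (i + k) hin).1 (hdc.mp hd))
    · exact ((hIc (i + k) hin).2 (fun hc => hd (hdc.mpr hc))).trans_eq e1.symm
  · -- the character statement
    intro χ χ' χ'' hχ hχ' hχ''
    have hdL : ∀ i : ℕ, (hik : i + 1 < k) →
        (descPhi I' (fun m : Fin k => c ⟨m.1, lt_of_lt_of_le m.isLt hk⟩) i ↔
          descPhi I c i) := by
      intro i hik
      have hin : i + 1 < n := lt_of_lt_of_le hik hk
      have hdc : descComp I' i ↔ descComp I i := by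
        rw [hI' i]; exact and_iff_right hik
      constructor
      · rintro ⟨h, hcase⟩
        refine ⟨hin, ?_⟩
        rcases hcase with ⟨h1, h2⟩ | ⟨h1, h2⟩
        · exact Or.inl ⟨hdc.mp h1, h2⟩
        · exact Or.inr ⟨fun hc => h1 (hdc.mpr hc), h2⟩
      · rintro ⟨h, hcase⟩
        refine ⟨hik, ?_⟩
        rcases hcase with ⟨h1, h2⟩ | ⟨h1, h2⟩
        · exact Or.inl ⟨hdc.mpr h1, h2⟩
        · exact Or.inr ⟨fun hc => h1 (hdc.mp hc), h2⟩
    have hdR : ∀ i : ℕ, (hik : i + 1 < n - k) →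
        (descPhi I'' (fun m : Fin (n - k) => c ⟨m.1 + k, by omega⟩) i ↔
          descPhi I c (i + k)) := by
      intro i hik
      have hin : (i + k) + 1 < n := by omega
      have hdc : descComp I'' i ↔ descComp I (i + k) := by
        rw [hI'' i]; exact and_iff_right hik
      have e1 : c ⟨i + 1 + k, by omega⟩ = c ⟨(i + k) + 1, hin⟩ :=
        ccong _ _ _ _ (by omega)
      constructor
      · rintro ⟨h, hcase⟩
        refine ⟨hin, ?_⟩
        rcases hcase with ⟨h1, h2⟩ | ⟨h1, h2⟩
        · exact Or.inl ⟨hdc.mp h1, e1.symm.trans h2⟩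
        · exact Or.inr ⟨fun hc => h1 (hdc.mpr hc), fun hc => h2 (e1.trans hc)⟩
      · rintro ⟨h, hcase⟩
        refine ⟨hik, ?_⟩
        rcases hcase with ⟨h1, h2⟩ | ⟨h1, h2⟩
        · exact Or.inl ⟨hdc.mpr h1, e1.trans h2⟩
        · exact Or.inr ⟨fun hc => h1 (hdc.mp hc), fun hc => h2 (e1.symm.trans hc)⟩
    have h1 : χ.comp ε' = χ' := by
      apply ak_hom_ext
      · intro i
        have hik : i.1 + 1 < k := by have := i.isLt; omega
        have hin : i.1 + 1 < n := by omega
        show χ (ε' (Tg i)) = χ' (Tg i)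
        rw [hε'T i]
        by_cases hdp :
          descPhi I' (fun m : Fin k => c ⟨m.1, lt_of_lt_of_le m.isLt hk⟩) i.1
        · exact ((hχ.1 i.1 hin).1 ((hdL i.1 hik).mp hdp)).trans
            (((hχ'.1 i.1 hik).1 hdp).symm)
        · exact ((hχ.1 i.1 hin).2 (fun hc => hdp ((hdL i.1 hik).mpr hc))).trans
            (((hχ'.1 i.1 hik).2 hdp).symm)
      · intro j
        show χ (ε' (Xg j)) = χ' (Xg j)
        rw [hε'X j, char_xg hu hχ, char_xg hu hχ']
    have h2 : χ.comp ε'' = χ'' := by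
      apply ak_hom_ext
      · intro i
        have hik : i.1 + 1 < n - k := by have := i.isLt; omega
        have hin : (i.1 + k) + 1 < n := by omega
        show χ (ε'' (Tg i)) = χ'' (Tg i)
        rw [hε''T i]
        by_cases hdp :
          descPhi I'' (fun m : Fin (n - k) => c ⟨m.1 + k, by omega⟩) i.1
        · exact ((hχ.1 (i.1 + k) hin).1 ((hdR i.1 hik).mp hdp)).trans
            (((hχ''.1 i.1 hik).1 hdp).symm)
        · exact ((hχ.1 (i.1 + k) hin).2 (fun hc => hdp ((hdR i.1 hik).mpr hc))).trans
            (((hχ''.1 i.1 hik).2 hdp).symm)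
      · intro j
        show χ (ε'' (Xg j)) = χ'' (Xg j)
        rw [hε''X j, char_xg hu hχ, char_xg hu hχ'']
    intro a b
    have ha : χ (ε' a) = χ' a := AlgHom.congr_fun h1 a
    have hb : χ (ε'' b) = χ'' b := AlgHom.congr_fun h2 b
    rw [map_mul, ha, hb]

end

end AKSPaper
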